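/- In the Eisenberg–Noe setting (α_x = α_L = 1), define iterates p⁰(x) := p̄ and p^{k+1}(x) := p̄ ∧ (x + Πᵀ p^k(x)) for k ∈ ℕ and x ∈ ℝⁿ₊. Then: (i) 0 ≤ p^{k+1}(x) ≤ p^k(x) componentwise for every k; (ii) the pointwise limit lim_{k→∞} p^k(x) exists and equals the greatest clearing payment p(x); and (iii) every iterate p^k is submodular, i.e., p^k_i(x) + p^k_i(y) ≥ p^k_i(x ∧ y) + p^k_i(x ∨ y) for all x, y ∈ ℝⁿ₊ and i ≤ n. -/
import Mathlib


open Matrix BigOperators Filter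

noncomputable section

/-- Total liabilities `p̄_i = Σ_{j=1}^{n+1} L_{ij}`. -/
def pbar {n : ℕ} (L : Matrix (Fin n) (Fin (n + 1)) ℝ) (i : Fin n) : ℝ :=
  ∑ j, L i j

/-- Relative liabilities `π_{ij} = L_{ij} / p̄_i` if `p̄_i > 0`, else `0`. -/
def relLiab {n : ℕ} (L : Matrix (Fin n) (Fin (n + 1)) ℝ) (i j : Fin n) : ℝ :=
  if 0 < pbar L i then L i j.castSucc / pbar L i else 0

/-- `p` is the greatest clearing payment vector for endowments `x` in the Eisenberg–Noe
setting: the greatest fixed point of `p ↦ p̄ ∧ (x + Πᵀ p)` on `[0, p̄]`. -/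
def IsGreatestClearingPayment {n : ℕ} (L : Matrix (Fin n) (Fin (n + 1)) ℝ)
    (x p : Fin n → ℝ) : Prop :=
  IsGreatest {q : Fin n → ℝ | (∀ i, 0 ≤ q i ∧ q i ≤ pbar L i) ∧
    ∀ i, q i = min (pbar L i) (x i + ∑ j, relLiab L j i * q j)} p

lemma pbar_nonneg {n : ℕ} (L : Matrix (Fin n) (Fin (n + 1)) ℝ)
    (hL : ∀ i j, 0 ≤ L i j) (i : Fin n) : 0 ≤ pbar L i :=
  Finset.sum_nonneg fun j _ => hL i j

lemma relLiab_nonneg {n : ℕ} (L : Matrix (Fin n) (Fin (n + 1)) ℝ)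
    (hL : ∀ i j, 0 ≤ L i j) (i j : Fin n) : 0 ≤ relLiab L i j := by
  unfold relLiab
  split_ifs with h
  · exact div_nonneg (hL _ _) h.le
  · exact le_refl 0

lemma min_submod {a b u v c : ℝ} (hau : a ≤ u) (hav : a ≤ v) (hub : u ≤ b)
    (hsum : a + b ≤ u + v) :
    min c a + min c b ≤ min c u + min c v := by
  simp only [min_def]
  split_ifs <;> linarith

/-- In the Eisenberg–Noe setting, for the iterates `p⁰(x) = p̄`,
`p^{k+1}(x) = p̄ ∧ (x + Πᵀ p^k(x))`: (i) `0 ≤ p^{k+1}(x) ≤ p^k(x)`; (ii) the pointwise limit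
exists and equals the greatest clearing payment `p(x)`; (iii) every iterate is submodular. -/
theorem clearing_payment_iterates (n : ℕ) (hn : 1 ≤ n)
    (L : Matrix (Fin n) (Fin (n + 1)) ℝ)
    (hL : ∀ i j, 0 ≤ L i j) (hLdiag : ∀ i : Fin n, L i i.castSucc = 0)
    (P : (Fin n → ℝ) → (Fin n → ℝ))
    (hP : ∀ x : Fin n → ℝ, (∀ i, 0 ≤ x i) → IsGreatestClearingPayment L x (P x))
    (Pk : ℕ → (Fin n → ℝ) → (Fin n → ℝ))
    (hPk0 : ∀ x, Pk 0 x = pbar L)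
    (hPkS : ∀ k x, Pk (k + 1) x = fun i => min (pbar L i) (x i + ∑ j, relLiab L j i * Pk k x j)) :
    (∀ x : Fin n → ℝ, (∀ i, 0 ≤ x i) → ∀ k i, 0 ≤ Pk (k + 1) x i ∧ Pk (k + 1) x i ≤ Pk k x i)
    ∧ (∀ x : Fin n → ℝ, (∀ i, 0 ≤ x i) → ∀ i,
        Tendsto (fun k => Pk k x i) atTop (nhds (P x i)))
    ∧ (∀ k, ∀ x y : Fin n → ℝ, (∀ i, 0 ≤ x i) → (∀ i, 0 ≤ y i) → ∀ i,
        Pk k (x ⊓ y) i + Pk k (x ⊔ y) i ≤ Pk k x i + Pk k y i) := by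
  have hπ : ∀ i j, 0 ≤ relLiab L i j := relLiab_nonneg L hL
  have hpb : ∀ i, 0 ≤ pbar L i := pbar_nonneg L hL
  -- monotonicity in x
  have mono : ∀ k (x y : Fin n → ℝ), (∀ i, x i ≤ y i) → ∀ i, Pk k x i ≤ Pk k y i := by
    intro k
    induction k with
    | zero => intro x y _ i; simp [hPk0]
    | succ k ih =>
      intro x y hxy i
      simp only [hPkS]
      exact min_le_min le_rfl (add_le_add (hxy i)
        (Finset.sum_le_sum fun j _ => mul_le_mul_of_nonneg_left (ih x y hxy j) (hπ j i)))
  -- nonnegativity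
  have nonneg : ∀ (x : Fin n → ℝ), (∀ i, 0 ≤ x i) → ∀ k i, 0 ≤ Pk k x i := by
    intro x hx k
    induction k with
    | zero => intro i; rw [hPk0]; exact hpb i
    | succ k ih =>
      intro i
      simp only [hPkS]
      exact le_min (hpb i) (add_nonneg (hx i)
        (Finset.sum_nonneg fun j _ => mul_nonneg (hπ j i) (ih j)))
  -- antitone in k
  have anti : ∀ (x : Fin n → ℝ), (∀ i, 0 ≤ x i) → ∀ k i, Pk (k + 1) x i ≤ Pk k x i := by
    intro x hx k
    induction k with
    | zero =>
      intro i
      simp only [hPkS, hPk0]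
      exact min_le_left _ _
    | succ k ih =>
      intro i
      rw [congrFun (hPkS (k + 1) x) i, congrFun (hPkS k x) i]
      exact min_le_min le_rfl (add_le_add le_rfl
        (Finset.sum_le_sum fun j _ => mul_le_mul_of_nonneg_left (ih j) (hπ j i)))
  refine ⟨fun x hx k i => ⟨nonneg x hx (k + 1) i, anti x hx k i⟩, ?_, ?_⟩
  · -- convergence
    intro x hx
    obtain ⟨⟨hPmem, hPfix⟩, hPub⟩ := hP x hx
    set ℓ : Fin n → ℝ := fun i => ⨅ k, Pk k x i with hℓ
    have hbdd : ∀ i, BddBelow (Set.range fun k => Pk k x i) := by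
      intro i
      refine ⟨0, ?_⟩
      rintro _ ⟨k, rfl⟩
      exact nonneg x hx k i
    have hanti : ∀ i, Antitone fun k => Pk k x i := fun i =>
      antitone_nat_of_succ_le fun k => anti x hx k i
    have htendsto : ∀ i, Tendsto (fun k => Pk k x i) atTop (nhds (ℓ i)) := fun i =>
      tendsto_atTop_ciInf (hanti i) (hbdd i)
    have hfix : ∀ i, ℓ i = min (pbar L i) (x i + ∑ j, relLiab L j i * ℓ j) := by
      intro i
      have h1 : Tendsto (fun k => Pk (k + 1) x i) atTop (nhds (ℓ i)) :=
        (htendsto i).comp (tendsto_add_atTop_nat 1)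
      have h2 : Tendsto (fun k => min (pbar L i) (x i + ∑ j, relLiab L j i * Pk k x j)) atTop
          (nhds (min (pbar L i) (x i + ∑ j, relLiab L j i * ℓ j))) :=
        tendsto_const_nhds.min (tendsto_const_nhds.add
          (tendsto_finset_sum _ fun j _ => (htendsto j).const_mul _))
      have heq : (fun k => Pk (k + 1) x i)
          = fun k => min (pbar L i) (x i + ∑ j, relLiab L j i * Pk k x j) := by
        funext k
        simp only [hPkS]
      exact tendsto_nhds_unique (heq ▸ h1) h2
    have hℓmem : ℓ ∈ {q : Fin n → ℝ | (∀ i, 0 ≤ q i ∧ q i ≤ pbar L i) ∧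
        ∀ i, q i = min (pbar L i) (x i + ∑ j, relLiab L j i * q j)} := by
      refine ⟨fun i => ⟨le_ciInf fun k => nonneg x hx k i, ?_⟩, hfix⟩
      have := ciInf_le (hbdd i) 0
      rwa [show Pk 0 x i = pbar L i from congrFun (hPk0 x) i] at this
    have hℓ_le : ∀ i, ℓ i ≤ P x i := fun i => hPub hℓmem i
    have hle : ∀ k i, P x i ≤ Pk k x i := by
      intro k
      induction k with
      | zero => intro i; rw [hPk0]; exact (hPmem i).2
      | succ k ih =>
        intro i
        simp only [hPkS]
        calc P x i = min (pbar L i) (x i + ∑ j, relLiab L j i * P x j) := hPfix i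
          _ ≤ min (pbar L i) (x i + ∑ j, relLiab L j i * Pk k x j) :=
            min_le_min le_rfl (add_le_add le_rfl
              (Finset.sum_le_sum fun j _ => mul_le_mul_of_nonneg_left (ih j) (hπ j i)))
    have hP_le : ∀ i, P x i ≤ ℓ i := fun i => le_ciInf fun k => hle k i
    intro i
    have : ℓ i = P x i := le_antisymm (hℓ_le i) (hP_le i)
    rw [← this]
    exact htendsto i
  · -- submodularity
    intro k
    induction k with
    | zero =>
      intro x y _ _ i
      simp [hPk0]
    | succ k ih =>
      intro x y hx hy i
      simp only [hPkS]
      have hinf : ∀ j, (x ⊓ y) j ≤ x j := fun j => inf_le_left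
      have hinf' : ∀ j, (x ⊓ y) j ≤ y j := fun j => inf_le_right
      have hsup : ∀ j, x j ≤ (x ⊔ y) j := fun j => le_sup_left
      have hsumle : (∑ j, relLiab L j i * Pk k (x ⊓ y) j)
          + (∑ j, relLiab L j i * Pk k (x ⊔ y) j)
          ≤ (∑ j, relLiab L j i * Pk k x j) + (∑ j, relLiab L j i * Pk k y j) := by
        rw [← Finset.sum_add_distrib, ← Finset.sum_add_distrib]
        refine Finset.sum_le_sum fun j _ => ?_
        rw [← mul_add, ← mul_add]
        exact mul_le_mul_of_nonneg_left (ih x y hx hy j) (hπ j i)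
      have hminmax : (x ⊓ y) i + (x ⊔ y) i = x i + y i := by
        simp [Pi.inf_apply, Pi.sup_apply, min_add_max]
      refine min_submod ?_ ?_ ?_ ?_
      · exact add_le_add (hinf i)
          (Finset.sum_le_sum fun j _ =>
            mul_le_mul_of_nonneg_left (mono k _ _ hinf j) (hπ j i))
      · exact add_le_add (hinf' i)
          (Finset.sum_le_sum fun j _ =>
            mul_le_mul_of_nonneg_left (mono k _ _ hinf' j) (hπ j i))
      · exact add_le_add (hsup i)
          (Finset.sum_le_sum fun j _ =>
            mul_le_mul_of_nonneg_left (mono k _ _ hsup j) (hπ j i))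
      · linarith
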